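/- Let K be a field, L a commutative K-algebra equipped with a fixed K-vector space isomorphism L ≅ K^r, and n, d ≥ 1 integers with m = binom(n+d, n). Then there exist finitely many homogeneous polynomials H_1, …, H_t in r(n+1) variables over K with the following property: for every field extension K'/K, setting L' = L ⊗_K K' and letting φ : (L')^{n+1} → (K')^{r(n+1)} be the isomorphism of K'-vector spaces induced by the fixed isomorphism L ≅ K^r, and for every P = (a_0, …, a_n) ∈ (L')^{n+1}, the K'-vector space {F ∈ S_{n,d}(K') : F(P) = 0} has dimension strictly greater than max(m − r, 0) if and only if H_i(φ(P)) = 0 for every 1 ≤ i ≤ t. Here F(P) denotes the evaluation of F at (a_0, …, a_n) in the ring L'. -/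

import Mathlib

/-!
Let `b` be the basis of `L` given by `e`, `V = S_{n,d}(K')` and `g : V → L'` evaluation at `P`.
The forms vanishing at `P` are `ker g`, and `g V` is spanned by the monomials `P^μ`, `|μ| = d`, so
`dim ker g = m - ρ`, where `ρ` is the rank of the `m × r` matrix of coordinates of the `P^μ`.
Since `ρ ≤ m`, the condition `m - r < dim ker g` says `ρ < min r m`, i.e. that all minors of size
`min r m` vanish. The coordinates of `P^μ` are the values at `φ(P)` of polynomials over `K`
independent of `K'` and `P`: the coordinates of `A^μ` for the generic point
`A_j = ∑_k X_{j,k} ⊗ b_k` of `K[X] ⊗ L`. They are homogeneous of degree `d` because the span of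
the `p ⊗ l` with `p` homogeneous is a grading of `K[X] ⊗ L`, so the minors are homogeneous too.
-/

open TensorProduct

universe u v w

open Matrix Module MvPolynomial

section RankMinors

variable {F ι κ : Type*} [Field F] [Finite ι] [Fintype κ]

theorem Matrix.exists_linearIndependent_row_submatrix (M : Matrix ι κ F) {s : ℕ}
    (h : s ≤ M.rank) : ∃ α : Fin s → ι, LinearIndependent F (M.submatrix α id).row := by
  rw [M.rank_eq_finrank_span_row] at h
  obtain ⟨f, hf_mem, -, hf⟩ := Submodule.exists_fun_fin_finrank_span_eq F (Set.range M.row)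
  choose α hα using hf_mem
  refine ⟨α ∘ Fin.castLE h, ?_⟩
  have hrow : (M.submatrix (α ∘ Fin.castLE h) id).row = f ∘ Fin.castLE h :=
    funext fun i => hα _
  rw [hrow]
  exact hf.comp _ (Fin.castLE_injective h)

theorem Matrix.rank_lt_iff_forall_det_submatrix_eq_zero (M : Matrix ι κ F) (s : ℕ) :
    M.rank < s ↔ ∀ (α : Fin s → ι) (β : Fin s → κ), (M.submatrix α β).det = 0 := by
  constructor
  · intro h α β
    by_contra hdet
    have hunit : IsUnit (M.submatrix α β) := (isUnit_iff_isUnit_det _).2 (Ne.isUnit hdet)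
    have := M.rank_submatrix_le α β
    rw [rank_of_isUnit _ hunit, Fintype.card_fin] at this
    omega
  · intro h
    contrapose! h
    obtain ⟨α, hα⟩ := M.exists_linearIndependent_row_submatrix h
    have hs : s ≤ (M.submatrix α id)ᵀ.rank := by
      rw [rank_transpose, rank_eq_finrank_span_row, finrank_span_eq_card hα, Fintype.card_fin]
    obtain ⟨β, hβ⟩ := (M.submatrix α id)ᵀ.exists_linearIndependent_row_submatrix hs
    refine ⟨α, β, ?_⟩
    rw [← det_transpose]
    exact ((isUnit_iff_isUnit_det _).1 (linearIndependent_rows_iff_isUnit.1 hβ)).ne_zero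

end RankMinors

theorem Finsupp.natCard_degree_eq_choose (σ : Type*) [Fintype σ] (d : ℕ) :
    Nat.card {μ : σ →₀ ℕ // μ.degree = d} = (Fintype.card σ + d - 1).choose d := by
  classical
  have hset : {μ : σ →₀ ℕ | μ.degree = d} =
      ((Finset.univ : Finset σ).finsuppAntidiag d : Set (σ →₀ ℕ)) := by
    ext μ
    simp [Finset.mem_finsuppAntidiag, Finsupp.degree_eq_sum]
  rw [← Set.coe_ofPred, hset, Nat.card_coe_set_eq, Set.ncard_coe_finset,
    Finset.card_finsuppAntidiag_nat_eq_choose, Finset.card_univ]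

theorem MvPolynomial.finrank_homogeneousSubmodule (σ R : Type*) [Fintype σ] [CommRing R]
    [Nontrivial R] (d : ℕ) :
    finrank R (homogeneousSubmodule σ R d) = (Fintype.card σ + d - 1).choose d := by
  rw [homogeneousSubmodule_eq_finsupp_supported,
    (AddMonoidAlgebra.supportedEquivFinsupp (S := R) (R := R) _).finrank_eq,
    finrank_eq_nat_card_basis (Finsupp.basisSingleOne), ← Finsupp.natCard_degree_eq_choose]
  rfl

theorem MvPolynomial.homogeneousSubmodule_eq_span_monomial (σ R : Type*) [CommSemiring R]
    (d : ℕ) : homogeneousSubmodule σ R d =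
      Submodule.span R ((fun μ => monomial μ (1 : R)) '' {μ : σ →₀ ℕ | μ.degree = d}) := by
  rw [homogeneousSubmodule_eq_finsupp_supported, AddMonoidAlgebra.supported_eq_span_single]
  rfl

theorem Submodule.finrank_inf_ker_add_finrank_map {K W W' : Type*} [Field K] [AddCommGroup W]
    [Module K W] [AddCommGroup W'] [Module K W'] (V : Submodule K W) [FiniteDimensional K V]
    (g : W →ₗ[K] W') :
    finrank K ↥(V ⊓ LinearMap.ker g) + finrank K (V.map g) = finrank K V := by
  have hker : (V ⊓ LinearMap.ker g).comap V.subtype = LinearMap.ker (g.domRestrict V) := by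
    rw [Submodule.comap_inf, Submodule.comap_subtype_self, LinearMap.ker_domRestrict, top_inf_eq]
  rw [← LinearMap.range_domRestrict, ← (Submodule.comapSubtypeEquivOfLe inf_le_left).finrank_eq,
    hker, add_comm, LinearMap.finrank_range_add_finrank_ker]

theorem Module.Basis.rank_of_repr_eq_finrank_span {K M ι T : Type*} [Field K] [AddCommGroup M]
    [Module K M] [Fintype ι] [Finite T] (b : Basis ι K M) (v : T → M) :
    (Matrix.of fun t k => b.repr (v t) k).rank = finrank K (Submodule.span K (Set.range v)) := by
  rw [rank_eq_finrank_span_row]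
  have hrow : Set.range (Matrix.of fun t k => b.repr (v t) k).row = b.equivFun '' Set.range v := by
    rw [← Set.range_comp]
    rfl
  rw [hrow, Submodule.span_image_linearEquiv, LinearEquiv.finrank_map_eq]

theorem MvPolynomial.IsHomogeneous.det {σ R n : Type*} [CommRing R] [Fintype n] [DecidableEq n]
    {M : Matrix n n (MvPolynomial σ R)} {c : ℕ} (h : ∀ i j, (M i j).IsHomogeneous c) :
    M.det.IsHomogeneous (Fintype.card n * c) := by
  rw [det_apply]
  refine IsHomogeneous.sum _ _ _ fun τ _ => ?_
  have hprod := IsHomogeneous.prod Finset.univ (fun i => M (τ i) i) (fun _ => c)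
    fun i _ => h _ _
  simp only [Finset.sum_const, Finset.card_univ, smul_eq_mul] at hprod
  exact Submodule.smul_of_tower_mem (homogeneousSubmodule σ R _) _ hprod

section GenericPoint

variable {σ ι K L : Type*} [CommRing K] [CommRing L] [Algebra K L]

variable (σ K L) in
noncomputable def tensorHomogeneous (c : ℕ) : Submodule K (MvPolynomial σ K ⊗[K] L) :=
  Submodule.span K {x | ∃ p ∈ homogeneousSubmodule σ K c, ∃ l : L, x = p ⊗ₜ l}

instance : SetLike.GradedMonoid (tensorHomogeneous σ K L) where
  one_mem := Submodule.subset_span ⟨1, isHomogeneous_one _ _, 1, Algebra.TensorProduct.one_def⟩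
  mul_mem a c x y hx hy := by
    have hle : tensorHomogeneous σ K L a * tensorHomogeneous σ K L c ≤
        tensorHomogeneous σ K L (a + c) := by
      rw [tensorHomogeneous, tensorHomogeneous, Submodule.span_mul_span, Submodule.span_le]
      rintro _ ⟨_, ⟨p, hp, l, rfl⟩, _, ⟨q, hq, l', rfl⟩, rfl⟩
      exact Submodule.subset_span
        ⟨p * q, hp.mul hq, l * l', Algebra.TensorProduct.tmul_mul_tmul ..⟩
    exact hle (Submodule.mul_mem_mul hx hy)

namespace Module.Basis

theorem baseChange_repr_mem_homogeneousSubmodule (b : Basis ι K L) {c : ℕ}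
    {x : MvPolynomial σ K ⊗[K] L} (hx : x ∈ tensorHomogeneous σ K L c) (k : ι) :
    (b.baseChange (MvPolynomial σ K)).repr x k ∈ homogeneousSubmodule σ K c := by
  have hle : tensorHomogeneous σ K L c ≤ (homogeneousSubmodule σ K c).comap
      (((b.baseChange (MvPolynomial σ K)).coord k).restrictScalars K) := by
    refine Submodule.span_le.2 ?_
    rintro _ ⟨p, hp, l, rfl⟩
    simpa [Basis.baseChange_repr_tmul] using Submodule.smul_mem _ (b.repr l k) hp
  exact hle hx

theorem baseChange_repr_map {A B : Type*} [CommRing A] [CommRing B] [Algebra K A] [Algebra K B]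
    (b : Basis ι K L) (f : A →ₐ[K] B) (x : A ⊗[K] L) (k : ι) :
    (b.baseChange B).repr (Algebra.TensorProduct.map f (AlgHom.id K L) x) k =
      f ((b.baseChange A).repr x k) := by
  induction x using TensorProduct.induction_on with
  | zero => simp
  | tmul a l => simp [Basis.baseChange_repr_tmul]
  | add x y hx hy => simp [hx, hy]

variable [Fintype ι]

noncomputable def genericPoint (b : Basis ι K L) (j : σ) : MvPolynomial (σ × ι) K ⊗[K] L :=
  ∑ k, X (j, k) ⊗ₜ b k

noncomputable def genericMonomialCoord (b : Basis ι K L) (μ : σ →₀ ℕ) (k : ι) :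
    MvPolynomial (σ × ι) K :=
  (b.baseChange (MvPolynomial (σ × ι) K)).repr (aeval (genericPoint b) (monomial μ (1 : K))) k

theorem genericPoint_mem_tensorHomogeneous (b : Basis ι K L) (j : σ) :
    genericPoint b j ∈ tensorHomogeneous (σ × ι) K L 1 :=
  Submodule.sum_mem _ fun k _ => Submodule.subset_span ⟨X (j, k), isHomogeneous_X _ _, b k, rfl⟩

theorem isHomogeneous_genericMonomialCoord (b : Basis ι K L) (μ : σ →₀ ℕ) (k : ι) :
    (genericMonomialCoord b μ k).IsHomogeneous μ.degree := by
  refine b.baseChange_repr_mem_homogeneousSubmodule ?_ k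
  have hprod := SetLike.prod_pow_mem_graded (tensorHomogeneous (σ × ι) K L) (fun _ => 1)
    (genericPoint b) (F := μ.support) μ fun j _ => genericPoint_mem_tensorHomogeneous b j
  simpa [aeval_monomial, Finsupp.prod, Finsupp.degree_apply, ← Algebra.TensorProduct.one_def]
    using hprod

theorem aeval_genericMonomialCoord {K' : Type*} [CommRing K'] [Algebra K K']
    (b : Basis ι K L) (P : σ → K' ⊗[K] L) (μ : σ →₀ ℕ) (k : ι) :
    aeval (fun jk : σ × ι => (b.baseChange K').repr (P jk.1) jk.2)
        (genericMonomialCoord b μ k) =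
      (b.baseChange K').repr (aeval P (monomial μ (1 : K'))) k := by
  set c : σ × ι → K' := fun jk => (b.baseChange K').repr (P jk.1) jk.2
  have hP (j : σ) :
      Algebra.TensorProduct.map (aeval c) (AlgHom.id K L) (genericPoint b j) = P j := by
    conv_rhs => rw [← (b.baseChange K').sum_repr (P j)]
    simp [genericPoint, c, Basis.baseChange_apply, TensorProduct.smul_tmul']
  rw [genericMonomialCoord, ← baseChange_repr_map, comp_aeval_apply, funext hP]
  simp [aeval_monomial]

end Module.Basis

end GenericPoint

section MonomialMatrix

variable {σ ι K L : Type*} [Fintype σ] [Fintype ι] [CommRing K] [CommRing L] [Algebra K L]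

namespace Module.Basis

noncomputable def genericMonomialMatrix (b : Basis ι K L) (d : ℕ) :
    Matrix {μ : σ →₀ ℕ // μ.degree = d} ι (MvPolynomial (σ × ι) K) :=
  Matrix.of fun μ k => b.genericMonomialCoord μ.1 k

theorem finrank_inf_ker_aeval_add_rank {K' : Type*} [Field K'] [Algebra K K'] (b : Basis ι K L)
    (P : σ → K' ⊗[K] L) (d : ℕ) :
    finrank K' ↥(homogeneousSubmodule σ K' d ⊓ LinearMap.ker (aeval P).toLinearMap) +
      ((b.genericMonomialMatrix d).map
        (aeval fun jk : σ × ι => (b.baseChange K').repr (P jk.1) jk.2)).rank =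
      (Fintype.card σ + d - 1).choose d := by
  have : Finite {μ : σ →₀ ℕ // μ.degree = d} := Finsupp.finite_of_degree_eq d
  have : FiniteDimensional K' (homogeneousSubmodule σ K' d) :=
    Module.Finite.iff_fg.2 (homogeneousSubmodule_fg σ K' d)
  have hmatrix : (b.genericMonomialMatrix d).map
      (aeval fun jk : σ × ι => (b.baseChange K').repr (P jk.1) jk.2) =
      Matrix.of fun μ k => (b.baseChange K').repr (aeval P (monomial μ.1 (1 : K'))) k := by
    ext μ k
    exact b.aeval_genericMonomialCoord P μ.1 k
  have hmap : (homogeneousSubmodule σ K' d).map (aeval P).toLinearMap =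
      Submodule.span K' (Set.range fun μ : {μ : σ →₀ ℕ // μ.degree = d} =>
        aeval P (monomial μ.1 (1 : K'))) := by
    rw [homogeneousSubmodule_eq_span_monomial, Submodule.map_span, ← Set.image_comp,
      Set.image_eq_range]
    rfl
  rw [hmatrix, Basis.rank_of_repr_eq_finrank_span, ← hmap,
    Submodule.finrank_inf_ker_add_finrank_map, finrank_homogeneousSubmodule]

end Module.Basis

end MonomialMatrix

theorem stmt6_general (K : Type u) (L : Type v) [Field K] [CommRing L] [Algebra K L]
    (r : ℕ) (e : L ≃ₗ[K] (Fin r → K)) (n d : ℕ) :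
    ∃ (t : ℕ) (H : Fin t → MvPolynomial (Fin (n + 1) × Fin r) K),
      (∀ i, ∃ c : ℕ, (H i).IsHomogeneous c) ∧
      ∀ (K' : Type w) [Field K'] [Algebra K K'],
        ∀ P : Fin (n + 1) → (K' ⊗[K] L),
          ((n + d).choose n - r <
            Module.finrank K'
              ↥(MvPolynomial.homogeneousSubmodule (Fin (n + 1)) K' d ⊓
                LinearMap.ker
                  (MvPolynomial.aeval (R := K') (S₁ := K' ⊗[K] L) P).toLinearMap))
          ↔ ∀ i, MvPolynomial.aeval (R := K) (S₁ := K')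
              (fun jk : Fin (n + 1) × Fin r =>
                ((Module.Basis.ofEquivFun e).baseChange K').repr (P jk.1) jk.2)
              (H i) = 0 := by
  set b := Module.Basis.ofEquivFun e
  set s := min r ((n + d).choose n)
  have : Finite {μ : Fin (n + 1) →₀ ℕ // μ.degree = d} := Finsupp.finite_of_degree_eq d
  let minors := (Fin s → {μ : Fin (n + 1) →₀ ℕ // μ.degree = d}) × (Fin s → Fin r)
  let en := (Finite.equivFin minors).symm
  refine ⟨Nat.card minors, fun i => ((b.genericMonomialMatrix d).submatrix (en i).1 (en i).2).det,
    fun i => ⟨s * d, ?_⟩, fun K' _ _ P => ?_⟩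
  · have h := IsHomogeneous.det (M := (b.genericMonomialMatrix d).submatrix (en i).1 (en i).2)
      fun a a' =>
        ((en i).1 a).2 ▸ b.isHomogeneous_genericMonomialCoord ((en i).1 a).1 ((en i).2 a')
    rwa [Fintype.card_fin] at h
  · have hdim := b.finrank_inf_ker_aeval_add_rank P d
    rw [Fintype.card_fin, show n + 1 + d - 1 = n + d by omega, ← Nat.choose_symm_add] at hdim
    set M := (b.genericMonomialMatrix d).map
      (aeval fun jk : Fin (n + 1) × Fin r => (b.baseChange K').repr (P jk.1) jk.2)
    trans M.rank < s
    · omega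
    rw [rank_lt_iff_forall_det_submatrix_eq_zero, en.forall_congr_left, Prod.forall]
    simp [M, submatrix_map, AlgHom.map_det]

/-- **Proposition (existence of minors).** Let `K` be a field, `L` a commutative `K`-algebra
with a fixed `K`-vector-space isomorphism `e : L ≅ K^r`, and `n, d ≥ 1` with
`m = (n+d).choose n`. Then there are finitely many homogeneous polynomials `H_1, …, H_t` in
`r(n+1)` variables (indexed by `Fin (n+1) × Fin r`) over `K` such that for every field
extension `K'/K`, setting `L' = K' ⊗[K] L`, and every `P ∈ (L')^{n+1}`, the space of
degree-`d` forms over `K'` vanishing at `P` has `K'`-dimension strictly greater than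
`max (m - r) 0 = m - r` iff all the `H_i` vanish at `φ(P)`, where `φ` is induced by `e`
(coordinates of the entries of `P` with respect to the base-changed basis of `L`). -/
theorem stmt6 (K : Type u) (L : Type v) [Field K] [CommRing L] [Algebra K L]
    (r : ℕ) (e : L ≃ₗ[K] (Fin r → K)) (n d : ℕ) (hn : 1 ≤ n) (hd : 1 ≤ d) :
    ∃ (t : ℕ) (H : Fin t → MvPolynomial (Fin (n + 1) × Fin r) K),
      (∀ i, ∃ c : ℕ, (H i).IsHomogeneous c) ∧
      ∀ (K' : Type w) [Field K'] [Algebra K K'],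
        ∀ P : Fin (n + 1) → (K' ⊗[K] L),
          ((n + d).choose n - r <
            Module.finrank K'
              ↥(MvPolynomial.homogeneousSubmodule (Fin (n + 1)) K' d ⊓
                LinearMap.ker
                  (MvPolynomial.aeval (R := K') (S₁ := K' ⊗[K] L) P).toLinearMap))
          ↔ ∀ i, MvPolynomial.aeval (R := K) (S₁ := K')
              (fun jk : Fin (n + 1) × Fin r =>
                ((Module.Basis.ofEquivFun e).baseChange K').repr (P jk.1) jk.2)
              (H i) = 0 :=
  stmt6_general K L r e n d
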